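/- Let L ∈ 𝐋^reg and let V, W ∈ 𝐕(L) satisfy d_ABW(L+uV, L+uW) = 0 for all u ∈ [0,1]. Then V = W. That is, for regular L, the matrix V ∈ 𝐕(L) representing a given constant speed geodesic u ↦ [L+uV] emanating from [L] is unique. -/

import Mathlib

open Matrix Filter Topology

/-- Square matrices of size `dT × dT`, indexed by blocks: index `(t, i)` is
row/column `i` within block `t`. -/
abbrev Mat (d T : ℕ) := Matrix (Fin T × Fin d) (Fin T × Fin d) ℝ

/-- The `t`-th diagonal `d × d` block of a `dT × dT` matrix. -/
def blk {d T : ℕ} (A : Mat d T) (t : Fin T) : Matrix (Fin d) (Fin d) ℝ :=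
  fun i j => A (t, i) (t, j)

/-- The `t`-th block column of a `dT × dT` matrix, a `dT × d` matrix. -/
def colBlk {d T : ℕ} (A : Mat d T) (t : Fin T) : Matrix (Fin T × Fin d) (Fin d) ℝ :=
  fun p j => A p (t, j)

/-- Membership in `𝐋`: block lower triangular matrices. -/
def memL {d T : ℕ} (A : Mat d T) : Prop :=
  ∀ (t s : Fin T) (i j : Fin d), t < s → A (t, i) (s, j) = 0

/-- Membership in `𝐎`: block diagonal matrices with orthogonal `d × d` diagonal blocks
(equivalently: block diagonal and orthogonal). -/
def memO {d T : ℕ} (O : Mat d T) : Prop :=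
  (∀ (t s : Fin T) (i j : Fin d), t ≠ s → O (t, i) (s, j) = 0) ∧ Oᵀ * O = 1

/-- The Frobenius norm of a real matrix. -/
noncomputable def frobNorm {m n : Type*} [Fintype m] [Fintype n] (A : Matrix m n ℝ) : ℝ :=
  Real.sqrt (∑ i, ∑ j, (A i j) ^ 2)

/-- The Frobenius inner product of two real matrices. -/
noncomputable def frobInner {m n : Type*} [Fintype m] [Fintype n] (A B : Matrix m n ℝ) : ℝ :=
  ∑ i, ∑ j, A i j * B i j

/-- The adapted Bures–Wasserstein distance `d_ABW(L, M) = inf_{O ∈ 𝐎} ‖L - M O‖_F`. -/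
noncomputable def dABW {d T : ℕ} (L M : Mat d T) : ℝ :=
  sInf {r : ℝ | ∃ O : Mat d T, memO O ∧ r = frobNorm (L - M * O)}

/-- The set `𝐎*(L, M)` of optimizers of `inf_{O ∈ 𝐎} ‖L - M O‖_F`. -/
noncomputable def OStar {d T : ℕ} (L M : Mat d T) : Set (Mat d T) :=
  {O | memO O ∧ frobNorm (L - M * O) = dABW L M}

/-- The set `𝐕(L) = {M P - L : M ∈ 𝐋, P ∈ 𝐎*(L, M)}`. -/
noncomputable def VSet {d T : ℕ} (L : Mat d T) : Set (Mat d T) :=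
  {V | ∃ M P : Mat d T, memL M ∧ P ∈ OStar L M ∧ V = M * P - L}

/-- The set `𝒱(L) = {V ∈ 𝐋 : (Vᵀ L)_{t,t} is symmetric for all t}`. -/
def calV {d T : ℕ} (L : Mat d T) : Set (Mat d T) :=
  {V | memL V ∧ ∀ t : Fin T, (blk (Vᵀ * L) t).IsSymm}

/-- The set `𝐋^reg = {L ∈ 𝐋 : (Lᵀ L)_{t,t} is positive definite for all t}`. -/
def LReg {d T : ℕ} : Set (Mat d T) :=
  {L | memL L ∧ ∀ t : Fin T, (blk (Lᵀ * L) t).PosDef}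

/-- The sum of the singular values of a real square matrix `A`,
i.e. the trace of the positive semidefinite square root of `Aᵀ A`. -/
noncomputable def svSum {n : ℕ} (A : Matrix (Fin n) (Fin n) ℝ) : ℝ :=
  ((Matrix.posSemidef_conjTranspose_mul_self A).isHermitian.eigenvectorUnitary.1 *
    diagonal (fun i => Real.sqrt
      ((Matrix.posSemidef_conjTranspose_mul_self A).isHermitian.eigenvalues i)) *
    (star (Matrix.posSemidef_conjTranspose_mul_self A).isHermitian.eigenvectorUnitary :
      Matrix (Fin n) (Fin n) ℝ)).trace

/-- The operator norm of a real matrix: the supremum of the euclidean norm `‖A x‖₂`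
over the euclidean unit ball. -/
noncomputable def opNorm {m n : Type*} [Fintype m] [Fintype n] (A : Matrix m n ℝ) : ℝ :=
  sSup {r : ℝ | ∃ x : n → ℝ, (∑ j, (x j) ^ 2) ≤ 1 ∧ r = Real.sqrt (∑ i, (A.mulVec x i) ^ 2)}

/-!
Write `a`, `v`, `w` for the `t`-th block columns of `L`, `V`, `W`. Optimality of `P` in the
definition of `𝐕(L)`, tested against Givens rotations inside the `t`-th block, makes `aᵀ v` and
`aᵀ w` symmetric. Since `𝐎` is compact, `d_ABW = 0` is attained, so for small `u > 0` there is
an orthogonal `Q_u` with `a + u v = (a + u w) Q_u`. Solving for `Q_u` gives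
`Q_u = 1 + u E_u` with `E_u = (Xᵀ X)⁻¹ Xᵀ (v - w)`, `X = a + u w`, which is continuous at
`u = 0` because `aᵀ a` is invertible. Letting `u → 0` yields `v - w = a K` with `K = E_0`
skew-symmetric, while `aᵀ a K = aᵀ (v - w)` is symmetric; then
`‖a K‖² = tr (Kᵀ aᵀ a K) = -tr (K aᵀ a Kᵀ) = -‖a Kᵀ‖² ≤ 0`, so `v = w`.
-/

lemma eq_zero_of_forall_sq_add_sq_eq_one {a b : ℝ}
    (h : ∀ c s : ℝ, c ^ 2 + s ^ 2 = 1 → (c - 1) * a + s * b ≤ 0) : b = 0 := by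
  by_contra hb
  set r := √(a ^ 2 + b ^ 2)
  have hr : 0 < r := Real.sqrt_pos.mpr (by positivity)
  have hr2 : r ^ 2 = a ^ 2 + b ^ 2 := Real.sq_sqrt (by positivity)
  have har : a < r := Real.lt_sqrt_of_sq_lt (lt_add_of_pos_right _ (by positivity))
  have hle := h (a / r) (b / r) (by field_simp; linarith)
  have heq : (a / r - 1) * a + b / r * b = r - a := by field_simp; linarith
  linarith

lemma eq_of_continuousAt_of_eventually_eq {X : Type*} [TopologicalSpace X] [T2Space X]
    {f : ℝ → X} {x : ℝ} {c : X} (hf : ContinuousAt f x) (h : ∀ᶠ u in 𝓝[>] x, f u = c) :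
    f x = c :=
  tendsto_nhds_unique (hf.tendsto.mono_left nhdsWithin_le_nhds)
    (tendsto_const_nhds.congr' (h.mono fun _ hu => hu.symm))

section RealMatrix

variable {m n : Type*} [Fintype m] [Fintype n]

lemma frobNorm_eq_sqrt_trace (A : Matrix m n ℝ) : frobNorm A = √((Aᵀ * A).trace) := by
  rw [frobNorm, trace, Finset.sum_comm]
  simp [mul_apply, sq]

lemma trace_transpose_mul_self_nonneg (A : Matrix m n ℝ) : 0 ≤ (Aᵀ * A).trace := by
  simpa using (posSemidef_conjTranspose_mul_self A).trace_nonneg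

lemma eq_zero_of_isSymm_transpose_mul_of_skew {a : Matrix m n ℝ} {K : Matrix n n ℝ}
    (hsymm : (aᵀ * (a * K)).IsSymm) (hskew : Kᵀ + K = 0) : a * K = 0 := by
  have hcomm : aᵀ * a * K = -(K * (aᵀ * a)) := by
    have := hsymm.eq
    rw [transpose_mul, transpose_mul, eq_neg_of_add_eq_zero_left hskew, transpose_transpose]
      at this
    rw [Matrix.mul_assoc, ← this, Matrix.neg_mul, Matrix.neg_mul, Matrix.mul_assoc]
  have h1 : ((a * K)ᵀ * (a * K)).trace = -((a * Kᵀ)ᵀ * (a * Kᵀ)).trace :=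
    calc ((a * K)ᵀ * (a * K)).trace = (Kᵀ * (aᵀ * a * K)).trace := by
          simp only [transpose_mul, Matrix.mul_assoc]
      _ = -(K * (aᵀ * a) * Kᵀ).trace := by
          rw [hcomm, Matrix.mul_neg, trace_neg, trace_mul_comm]
      _ = -((a * Kᵀ)ᵀ * (a * Kᵀ)).trace := by
          simp only [transpose_mul, transpose_transpose, Matrix.mul_assoc]
  have h0 : ((a * K)ᵀ * (a * K)).trace = 0 :=
    le_antisymm (h1 ▸ neg_nonpos.mpr (trace_transpose_mul_self_nonneg _))
      (trace_transpose_mul_self_nonneg _)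
  simpa using (trace_conjTranspose_mul_self_eq_zero_iff (A := a * K)).mp (by simpa using h0)

variable [DecidableEq n]

lemma isSymm_of_forall_trace_mul_le (D : Matrix n n ℝ)
    (h : ∀ Q : Matrix n n ℝ, Qᵀ * Q = 1 → (D * Q).trace ≤ D.trace) : D.IsSymm := by
  refine IsSymm.ext fun i j => ?_
  rcases eq_or_ne i j with rfl | hij
  · rfl
  have hz : ∀ (p q : n) (x y : ℝ), single p i x * single j q y = 0 ∧
      single p j x * single i q y = 0 := fun p q x y =>
    ⟨single_mul_single_of_ne (c := x) p i j hij y,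
      single_mul_single_of_ne (c := x) p j i hij.symm y⟩
  refine sub_eq_zero.mp
    (eq_zero_of_forall_sq_add_sq_eq_one (a := D i i + D j j) fun c s hcs => ?_)
  set Q : Matrix n n ℝ := 1 + (c - 1) • (single i i 1 + single j j 1)
    + s • (single i j 1 - single j i 1)
  have hQ : Qᵀ * Q = 1 := by
    simp only [Q, transpose_add, transpose_smul, transpose_sub, transpose_one, transpose_single,
      Matrix.add_mul, Matrix.mul_add, Matrix.sub_mul, Matrix.mul_sub, Matrix.one_mul,
      Matrix.smul_mul, Matrix.mul_smul, single_mul_single_same, (hz _ _ _ _).1, (hz _ _ _ _).2,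
      mul_one]
    match_scalars <;> first | ring1 | linear_combination hcs
  have htr : (D * Q).trace = D.trace + ((c - 1) * (D i i + D j j) + s * (D j i - D i j)) := by
    rw [trace_mul_comm]
    simp only [Q, Matrix.add_mul, Matrix.sub_mul, Matrix.one_mul, Matrix.smul_mul, trace_add,
      trace_sub, trace_smul, trace_single_mul, smul_eq_mul]
    ring
  linarith [h Q hQ]

lemma trace_transpose_mul_self_sub_mul (l a : Matrix m n ℝ) {Q : Matrix n n ℝ}
    (hQ : Q * Qᵀ = 1) :
    ((l - a * Q)ᵀ * (l - a * Q)).trace =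
      (lᵀ * l).trace + (aᵀ * a).trace - 2 * (lᵀ * a * Q).trace := by
  have h1 : (Qᵀ * aᵀ * l).trace = (lᵀ * a * Q).trace := by
    rw [← trace_transpose]; simp only [transpose_mul, transpose_transpose, Matrix.mul_assoc]
  have h2 : (Qᵀ * aᵀ * (a * Q)).trace = (aᵀ * a).trace :=
    calc (Qᵀ * aᵀ * (a * Q)).trace = (aᵀ * a * (Q * Qᵀ)).trace := by
          rw [Matrix.mul_assoc, trace_mul_comm]; simp only [Matrix.mul_assoc]
      _ = (aᵀ * a).trace := by rw [hQ, Matrix.mul_one]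
  rw [transpose_sub, transpose_mul, Matrix.sub_mul, Matrix.mul_sub, Matrix.mul_sub, trace_sub,
    trace_sub, trace_sub, h1, h2, ← Matrix.mul_assoc]
  ring

lemma eq_one_add_smul_of_mul_eq_add_smul {X D : Matrix m n ℝ} {Q : Matrix n n ℝ} {u : ℝ}
    (hX : (Xᵀ * X).det ≠ 0) (hQ : X * Q = X + u • D) :
    Q = 1 + u • ((Xᵀ * X)⁻¹ * (Xᵀ * D)) := by
  have hS : Xᵀ * X * (Q - 1) = Xᵀ * (u • D) := by
    rw [Matrix.mul_assoc, Matrix.mul_sub, hQ, Matrix.mul_one, add_sub_cancel_left]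
  rw [← sub_eq_iff_eq_add',
    ← (Xᵀ * X).nonsing_inv_mul_cancel_left (Q - 1) (isUnit_iff_ne_zero.mpr hX), hS,
    Matrix.mul_smul, Matrix.mul_smul]

lemma eq_of_eventually_eq_mul_orthogonal {a v w : Matrix m n ℝ} (ha : (aᵀ * a).det ≠ 0)
    (hsymm : (aᵀ * (v - w)).IsSymm)
    (h : ∀ᶠ u in 𝓝[>] (0 : ℝ), ∃ Q : Matrix n n ℝ, Qᵀ * Q = 1 ∧ a + u • v = (a + u • w) * Q) :
    v = w := by
  set X : ℝ → Matrix m n ℝ := fun u => a + u • w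
  set S : ℝ → Matrix n n ℝ := fun u => (X u)ᵀ * X u
  set E : ℝ → Matrix n n ℝ := fun u => (S u)⁻¹ * ((X u)ᵀ * (v - w))
  have hX : Continuous X := continuous_const.add (continuous_id.smul continuous_const)
  have hS : Continuous S := hX.matrix_transpose.matrix_mul hX
  have hS0 : S 0 = aᵀ * a := by simp [S, X]
  have hE : ContinuousAt E 0 := by
    refine ((continuousAt_matrix_inv _ ?_).comp hS.continuousAt).mul
      (hX.matrix_transpose.matrix_mul continuous_const).continuousAt
    rw [hS0]
    exact NormedRing.inverse_continuousAt (Units.mk0 _ ha)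
  have hdet : ∀ᶠ u in 𝓝[>] (0 : ℝ), (S u).det ≠ 0 :=
    nhdsWithin_le_nhds <| hS.matrix_det.continuousAt.eventually_ne (by rwa [hS0])
  have hlin : ∀ᶠ u in 𝓝[>] (0 : ℝ),
      X u * E u = v - w ∧ (E u)ᵀ + E u + u • ((E u)ᵀ * E u) = 0 := by
    filter_upwards [h, hdet, self_mem_nhdsWithin] with u ⟨Q, hQ, hQeq⟩ hSu hu
    have hXQ : X u * Q = X u + u • (v - w) := by
      simp only [X]; rw [← hQeq, smul_sub]; abel
    have hQE : Q = 1 + u • E u := eq_one_add_smul_of_mul_eq_add_smul hSu hXQ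
    have hu0 : u ≠ 0 := (Set.mem_Ioi.mp hu).ne'
    refine ⟨smul_right_injective _ hu0 ?_, smul_right_injective _ hu0 ?_⟩
    · show u • _ = u • _
      rw [← Matrix.mul_smul, ← add_sub_cancel_left 1 (u • E u), ← hQE, Matrix.mul_sub, hXQ,
        Matrix.mul_one, add_sub_cancel_left]
    · show u • _ = u • _
      rw [hQE] at hQ
      simp only [transpose_add, transpose_one, transpose_smul, Matrix.add_mul, Matrix.mul_add,
        Matrix.one_mul, Matrix.mul_one, Matrix.smul_mul, Matrix.mul_smul, smul_add,
        smul_smul, smul_zero] at hQ ⊢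
      rwa [add_assoc, add_eq_left, ← add_assoc] at hQ
  have hXE : X 0 * E 0 = v - w :=
    eq_of_continuousAt_of_eventually_eq (by fun_prop) (hlin.mono fun _ hu => hu.1)
  have hskew : (E 0)ᵀ + E 0 + (0 : ℝ) • ((E 0)ᵀ * E 0) = 0 :=
    eq_of_continuousAt_of_eventually_eq (f := fun u => (E u)ᵀ + E u + u • ((E u)ᵀ * E u))
      (by fun_prop) (hlin.mono fun _ hu => hu.2)
  have hX0 : X 0 = a := by simp [X]
  rw [hX0] at hXE
  rw [zero_smul, add_zero] at hskew
  rw [← sub_eq_zero, ← hXE]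
  exact eq_zero_of_isSymm_transpose_mul_of_skew (hXE ▸ hsymm) hskew

end RealMatrix

section BlockMatrices

variable {d T : ℕ}

def IsBlockDiagonal (O : Mat d T) : Prop :=
  ∀ (t s : Fin T) (i j : Fin d), t ≠ s → O (t, i) (s, j) = 0

lemma blk_transpose_mul (A B : Mat d T) (t : Fin T) :
    blk (Aᵀ * B) t = (colBlk A t)ᵀ * colBlk B t :=
  rfl

lemma blk_one (t : Fin T) : blk (1 : Mat d T) t = 1 := by
  ext i j
  simp [blk, one_apply]

lemma trace_transpose_mul_self_eq_sum_colBlk (A : Mat d T) :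
    (Aᵀ * A).trace = ∑ t, ((colBlk A t)ᵀ * colBlk A t).trace := by
  rw [trace, Fintype.sum_prod_type]
  rfl

lemma frobNorm_colBlk_le_of_frobNorm_le {X Y : Mat d T} {t : Fin T}
    (hXY : ∀ s ≠ t, colBlk X s = colBlk Y s) (h : frobNorm X ≤ frobNorm Y) :
    frobNorm (colBlk X t) ≤ frobNorm (colBlk Y t) := by
  rw [frobNorm_eq_sqrt_trace, frobNorm_eq_sqrt_trace,
    Real.sqrt_le_sqrt_iff (trace_transpose_mul_self_nonneg _)] at h ⊢
  rw [trace_transpose_mul_self_eq_sum_colBlk, trace_transpose_mul_self_eq_sum_colBlk] at h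
  have hdiff : ∑ s, (((colBlk Y s)ᵀ * colBlk Y s).trace - ((colBlk X s)ᵀ * colBlk X s).trace) =
      ((colBlk Y t)ᵀ * colBlk Y t).trace - ((colBlk X t)ᵀ * colBlk X t).trace :=
    Finset.sum_eq_single t (fun s _ hs => by rw [hXY s hs, sub_self]) (by simp)
  rw [Finset.sum_sub_distrib] at hdiff
  linarith

lemma colBlk_mul_of_isBlockDiagonal {O : Mat d T} (hO : IsBlockDiagonal O) (N : Mat d T)
    (t : Fin T) : colBlk (N * O) t = colBlk N t * blk O t := by
  ext p j
  rw [colBlk, mul_apply, Fintype.sum_prod_type, Finset.sum_eq_single t]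
  · rfl
  · intro s _ hs
    exact Finset.sum_eq_zero fun k _ => by rw [hO s t k j hs, mul_zero]
  · simp

lemma transpose_mul_self_blk_of_memO {O : Mat d T} (hO : memO O) (t : Fin T) :
    (blk O t)ᵀ * blk O t = 1 := by
  rw [← blk_one t, ← hO.2]
  ext i j
  simp only [blk, mul_apply, transpose_apply, Fintype.sum_prod_type]
  rw [Finset.sum_eq_single t]
  · intro s _ hs
    exact Finset.sum_eq_zero fun k _ => by rw [hO.1 s t k i hs, zero_mul]
  · simp

def blockDiagonalOf (Q : Fin T → Matrix (Fin d) (Fin d) ℝ) : Mat d T :=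
  (blockDiagonal Q).submatrix (Equiv.prodComm _ _) (Equiv.prodComm _ _)

lemma blockDiagonalOf_apply (Q : Fin T → Matrix (Fin d) (Fin d) ℝ) (t s : Fin T) (i j : Fin d) :
    blockDiagonalOf Q (t, i) (s, j) = if t = s then Q t i j else 0 :=
  blockDiagonal_apply' Q i t j s

lemma blk_blockDiagonalOf (Q : Fin T → Matrix (Fin d) (Fin d) ℝ) (t : Fin T) :
    blk (blockDiagonalOf Q) t = Q t := by
  ext i j
  simp [blk, blockDiagonalOf_apply]

lemma memO_blockDiagonalOf {Q : Fin T → Matrix (Fin d) (Fin d) ℝ} (hQ : ∀ t, (Q t)ᵀ * Q t = 1) :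
    memO (blockDiagonalOf Q) := by
  refine ⟨fun t s i j hts => by simp [blockDiagonalOf_apply, hts], ?_⟩
  rw [blockDiagonalOf, transpose_submatrix, blockDiagonal_transpose, submatrix_mul_equiv,
    ← blockDiagonal_mul, show (fun t => (Q t)ᵀ * Q t) = 1 from funext hQ, blockDiagonal_one,
    submatrix_one_equiv]

lemma memO_one : memO (1 : Mat d T) := by
  have := memO_blockDiagonalOf (Q := (1 : Fin T → Matrix (Fin d) (Fin d) ℝ)) fun _ => by simp
  rwa [blockDiagonalOf, blockDiagonal_one, submatrix_one_equiv] at this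

lemma memO_mul {O₁ O₂ : Mat d T} (h₁ : memO O₁) (h₂ : memO O₂) : memO (O₁ * O₂) := by
  constructor
  · intro t s i j hts
    rw [mul_apply]
    refine Finset.sum_eq_zero fun ⟨r, k⟩ _ => ?_
    rcases eq_or_ne r s with rfl | hr
    · rw [h₁.1 t r i k hts, zero_mul]
    · rw [h₂.1 r s k j hr, mul_zero]
  · rw [transpose_mul, Matrix.mul_assoc, ← Matrix.mul_assoc O₁ᵀ, h₁.2, Matrix.one_mul, h₂.2]

lemma isCompact_setOf_memO : IsCompact {O : Mat d T | memO O} := by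
  have hclosed : IsClosed {O : Mat d T | memO O} := by
    simp only [memO, Set.ofPred_and, Set.ofPred_forall]
    exact (isClosed_iInter fun t => isClosed_iInter fun s => isClosed_iInter fun i =>
      isClosed_iInter fun j => isClosed_iInter fun _ =>
        isClosed_eq (continuous_apply_apply _ _) continuous_const).inter
      (isClosed_eq (continuous_id.matrix_transpose.matrix_mul continuous_id) continuous_const)
  refine (isCompact_univ_pi fun _ => isCompact_univ_pi fun _ =>
    isCompact_Icc (a := (-1 : ℝ)) (b := 1)).of_isClosed_subset
    hclosed fun O hO x _ y _ => abs_le.mp ?_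
  have hdiag := congrFun (congrFun hO.2 y) y
  simp only [one_apply_eq] at hdiag
  rw [← sq_le_one_iff_abs_le_one, ← hdiag, sq]
  exact Finset.single_le_sum (f := fun z => O z y * O z y) (fun z _ => mul_self_nonneg _)
    (Finset.mem_univ x)

lemma dABW_le {L M O : Mat d T} (hO : memO O) : dABW L M ≤ frobNorm (L - M * O) :=
  csInf_le ⟨0, fun _ ⟨_, _, hr⟩ => hr ▸ Real.sqrt_nonneg _⟩ ⟨O, hO, rfl⟩

lemma exists_memO_eq_mul_of_dABW_eq_zero {A B : Mat d T} (h : dABW A B = 0) :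
    ∃ O, memO O ∧ A = B * O := by
  have hset : {r : ℝ | ∃ O : Mat d T, memO O ∧ r = frobNorm (A - B * O)} =
      (fun O => frobNorm (A - B * O)) '' {O | memO O} := by
    ext r; simp [eq_comm]
  have hcont : Continuous fun O : Mat d T => frobNorm (A - B * O) := by
    unfold frobNorm; fun_prop
  obtain ⟨O, hO, hmin⟩ := (isCompact_setOf_memO.image hcont).sInf_mem ⟨_, 1, memO_one, rfl⟩
  refine ⟨O, hO, sub_eq_zero.mp ?_⟩
  have h0 : frobNorm (A - B * O) = 0 := by rw [← h, dABW, hset]; exact hmin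
  rw [frobNorm_eq_sqrt_trace, Real.sqrt_eq_zero (trace_transpose_mul_self_nonneg _)] at h0
  simpa using (trace_conjTranspose_mul_self_eq_zero_iff (A := A - B * O)).mp (by simpa using h0)

lemma trace_mul_le_of_mem_OStar {L M P : Mat d T} (hP : P ∈ OStar L M) (t : Fin T)
    {Q : Matrix (Fin d) (Fin d) ℝ} (hQ : Qᵀ * Q = 1) :
    ((colBlk L t)ᵀ * colBlk (M * P) t * Q).trace ≤ ((colBlk L t)ᵀ * colBlk (M * P) t).trace := by
  set N := M * P
  set R : Fin T → Matrix (Fin d) (Fin d) ℝ := Function.update 1 t Q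
  have hR : ∀ s, (R s)ᵀ * R s = 1 := fun s => by
    rcases eq_or_ne s t with rfl | hs
    · simpa [R] using hQ
    · simp [R, hs]
  have hB := memO_blockDiagonalOf hR
  have hcol : ∀ s, colBlk (L - N * blockDiagonalOf R) s = colBlk L s - colBlk N s * R s :=
    fun s => by
      rw [← blk_blockDiagonalOf R s, ← colBlk_mul_of_isBlockDiagonal hB.1]
      rfl
  have hle : frobNorm (colBlk (L - N) t) ≤ frobNorm (colBlk (L - N * blockDiagonalOf R) t) := by
    refine frobNorm_colBlk_le_of_frobNorm_le (fun s hs => ?_) ?_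
    · rw [hcol, show R s = 1 from Function.update_of_ne hs _ _, Matrix.mul_one]
      rfl
    · rw [Matrix.mul_assoc]
      exact hP.2 ▸ dABW_le (memO_mul hP.1 hB)
  have h1 := trace_transpose_mul_self_sub_mul (colBlk L t) (colBlk N t) (Q := 1) (by simp)
  rw [Matrix.mul_one, Matrix.mul_one] at h1
  rw [hcol, show R t = Q from Function.update_self .., frobNorm_eq_sqrt_trace, frobNorm_eq_sqrt_trace,
    Real.sqrt_le_sqrt_iff (trace_transpose_mul_self_nonneg _),
    trace_transpose_mul_self_sub_mul _ _ (mul_eq_one_comm.mp hQ)] at hle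
  change ((colBlk L t - colBlk N t)ᵀ * (colBlk L t - colBlk N t)).trace ≤ _ at hle
  linarith

lemma isSymm_blk_transpose_mul_of_mem_VSet {L V : Mat d T} (hV : V ∈ VSet L) (t : Fin T) :
    (blk (Vᵀ * L) t).IsSymm := by
  obtain ⟨M, P, -, hP, rfl⟩ := hV
  have hD := isSymm_of_forall_trace_mul_le _ fun Q hQ => trace_mul_le_of_mem_OStar hP t hQ
  change ((colBlk (M * P) t - colBlk L t)ᵀ * colBlk L t).IsSymm
  rw [transpose_sub, Matrix.sub_mul]
  refine IsSymm.sub ?_ ?_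
  · simpa only [transpose_mul, transpose_transpose] using hD.transpose
  · simp only [IsSymm, transpose_mul, transpose_transpose]

end BlockMatrices

theorem stmt12_general (d T : ℕ) (L V W : Mat d T)
    (hL : L ∈ LReg) (hV : V ∈ VSet L) (hW : W ∈ VSet L)
    (h : ∀ u ∈ Set.Icc (0 : ℝ) 1, dABW (L + u • V) (L + u • W) = 0) :
    V = W := by
  suffices hcol : ∀ t, colBlk V t = colBlk W t by
    ext p ⟨t, j⟩
    exact congrFun (congrFun (hcol t) p) j
  intro t
  have hdet : ((colBlk L t)ᵀ * colBlk L t).det ≠ 0 := (hL.2 t).det_pos.ne'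
  have hsymm : ((colBlk L t)ᵀ * (colBlk V t - colBlk W t)).IsSymm := by
    have hV' := (isSymm_blk_transpose_mul_of_mem_VSet hV t).transpose
    have hW' := (isSymm_blk_transpose_mul_of_mem_VSet hW t).transpose
    rw [blk_transpose_mul, transpose_mul, transpose_transpose] at hV' hW'
    rw [Matrix.mul_sub]
    exact hV'.sub hW'
  refine eq_of_eventually_eq_mul_orthogonal hdet hsymm ?_
  filter_upwards [Ioc_mem_nhdsGT zero_lt_one] with u hu
  obtain ⟨O, hO, hLO⟩ := exists_memO_eq_mul_of_dABW_eq_zero (h u (Set.Ioc_subset_Icc_self hu))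
  exact ⟨blk O t, transpose_mul_self_blk_of_memO hO t,
    (congrArg (colBlk · t) hLO).trans (colBlk_mul_of_isBlockDiagonal hO.1 _ t)⟩

/-- for regular `L`, the matrix `V ∈ 𝐕(L)` representing a constant speed
geodesic `u ↦ [L + uV]` emanating from `[L]` is unique. -/
theorem stmt12 (d T : ℕ) (hd : 0 < d) (hT : 0 < T) (L V W : Mat d T)
    (hL : L ∈ LReg) (hV : V ∈ VSet L) (hW : W ∈ VSet L)
    (h : ∀ u ∈ Set.Icc (0 : ℝ) 1, dABW (L + u • V) (L + u • W) = 0) :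
    V = W :=
  stmt12_general d T L V W hL hV hW h
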